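/- arXiv:1602.04700 — 2 statements merged into one kernel-verified Lean document; each statement's English description precedes it below -/
import Mathlib

section
/- If (u_k) satisfies the inverse iteration scheme ∂Φ(u_k) ∩ J_p(u_{k−1}) ≠ ∅ for all k ∈ ℕ, then ‖u_k‖ ≤ μ_p^{−1} ‖u_{k−1}‖ and Φ(u_k) ≤ μ_p^{−p} Φ(u_{k−1}) for all k, where μ_p = λ_p^{1/(p−1)}. In particular the sequences (‖μ_p^k u_k‖) and (Φ(μ_p^k u_k)) are nonincreasing. -/
open Filter Set MeasureTheory Topology
open scoped ENNReal NNReal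

noncomputable section

variable {X : Type*} [NormedAddCommGroup X] [NormedSpace ℝ X] [CompleteSpace X]

/-- Subdifferential of an `EReal`-valued functional `Φ` at `u`. -/
def ERealSubdiff (Φ : X → EReal) (u : X) : Set (X →L[ℝ] ℝ) :=
  {ξ | ∀ w : X, Φ u + ((ξ (w - u) : ℝ) : EReal) ≤ Φ w}

/-- The duality map `J_p`: the subdifferential of `‖·‖^p / p` at `u`. -/
def Jdual (p : ℝ) (u : X) : Set (X →L[ℝ] ℝ) :=
  {ξ | ∀ w : X, ‖u‖ ^ p / p + ξ (w - u) ≤ ‖w‖ ^ p / p}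

/-- Convexity for an `EReal`-valued functional. -/
def IsConvexE (Φ : X → EReal) : Prop :=
  ∀ u v : X, ∀ a b : ℝ, 0 ≤ a → 0 ≤ b → a + b = 1 →
    Φ (a • u + b • v) ≤ (a : EReal) * Φ u + (b : EReal) * Φ v

/-- Strict convexity on the domain `{Φ < ∞}`. -/
def IsStrictConvexOnDom (Φ : X → EReal) : Prop :=
  ∀ u v : X, Φ u ≠ ⊤ → Φ v ≠ ⊤ → u ≠ v → ∀ a b : ℝ, 0 < a → 0 < b → a + b = 1 →
    Φ (a • u + b • v) < (a : EReal) * Φ u + (b : EReal) * Φ v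

/-- Positive homogeneity of degree `p`. -/
def IsHomog (Φ : X → EReal) (p : ℝ) : Prop :=
  ∀ t : ℝ, 0 ≤ t → ∀ u : X, Φ (t • u) = ((t ^ p : ℝ) : EReal) * Φ u

/-- The set of Rayleigh quotients `p Φ(u)/‖u‖^p` over nonzero `u` in the domain. -/
def RayleighSet (Φ : X → EReal) (p : ℝ) : Set ℝ :=
  {r | ∃ u : X, u ≠ 0 ∧ Φ u ≠ ⊤ ∧ r = p * (Φ u).toReal / ‖u‖ ^ p}

/-- Simplicity of the least Rayleigh quotient `lam`. -/
def IsSimple (Φ : X → EReal) (p lam : ℝ) : Prop :=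
  ∀ u v : X, u ≠ 0 → v ≠ 0 → Φ u ≠ ⊤ → Φ v ≠ ⊤ →
    lam = p * (Φ u).toReal / ‖u‖ ^ p → lam = p * (Φ v).toReal / ‖v‖ ^ p →
    ∃ c : ℝ, v = c • u

/-- `P_w(u)`: best approximations of `u` from the ray `{β w : β ≥ 0}`. -/
def ProjRay (w u : X) : Set X :=
  {x | ∃ α : ℝ, 0 ≤ α ∧ x = α • w ∧ ∀ β : ℝ, 0 ≤ β → ‖u - α • w‖ ≤ ‖u - β • w‖}

/-- `α_w(u) := inf {α > 0 : α w ∈ P_w(u)}`. -/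
def alphaRay (w u : X) : ℝ :=
  sInf {α : ℝ | 0 < α ∧ α • w ∈ ProjRay w u}

/-- Local absolute continuity of a path on `[0, ∞)`. -/
def LocAC {E : Type*} [NormedAddCommGroup E] (v : ℝ → E) : Prop :=
  ∀ T : ℝ, 0 < T → ∃ h : ℝ → ℝ, IntegrableOn h (Icc 0 T) ∧
    ∀ s t : ℝ, 0 ≤ s → s ≤ t → t ≤ T → ‖v t - v s‖ ≤ ∫ τ in Icc s t, h τ

/-- `m` is the metric derivative of `v` (a.e. on `(0,∞)`). -/
def HasMetricDeriv {E : Type*} [NormedAddCommGroup E] (v : ℝ → E) (m : ℝ → ℝ) : Prop :=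
  ∀ᵐ t ∂(volume.restrict (Ioi (0:ℝ))),
    Tendsto (fun h : ℝ => ‖v (t + h) - v t‖ / |h|) (𝓝[≠] 0) (𝓝 (m t))

/-- Local slope `|∂Φ|(u) = limsup_{z → 0} (Φ(u) − Φ(u+z))⁺ / ‖z‖`, valued in `[0,∞]`. -/
def localSlope (Φ : X → EReal) (u : X) : ℝ≥0∞ :=
  Filter.limsup (fun z : X => ENNReal.ofReal ((Φ u - Φ (u + z)).toReal / ‖z‖)) (𝓝[≠] (0 : X))

/-- `v` is a `p`-curve of maximal slope for `Φ`, with metric derivative `m` and with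
`φ` a real-valued a.e.-differentiable representative of `Φ ∘ v`; the defining inequality
`(Φ ∘ v)' ≤ -m^p/p - |∂Φ|(v)^q/q` holds a.e. on `(0,∞)`. -/
def IsPCurve (Φ : X → EReal) (p q : ℝ) (v : ℝ → X) (m : ℝ → ℝ) (φ : ℝ → ℝ) : Prop :=
  LocAC v ∧ HasMetricDeriv v m ∧ (∀ t : ℝ, 0 ≤ t → (φ t : EReal) = Φ (v t)) ∧
  ∀ᵐ t ∂(volume.restrict (Ioi (0:ℝ))),
    ∃ d : ℝ, HasDerivAt φ d t ∧ d ≤ 0 ∧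
      ENNReal.ofReal (m t ^ p / p) + localSlope Φ (v t) ^ q / ENNReal.ofReal q ≤
        ENNReal.ofReal (-d)

/-!
Testing the subgradient and duality inequalities along the ray `t • v` (where both sides are
differentiable in `t`) gives Euler's identity `ξ v = p Φ(v)` for `ξ ∈ ∂Φ(v)` and `ξ u = ‖u‖^p`
for `ξ ∈ J_p(u)`; the latter together with Young's inequality gives `‖ξ‖ ≤ ‖u‖^(p-1)`. Hence a step
`ξ ∈ ∂Φ(v) ∩ J_p(u)` satisfies `λ_p ‖v‖^p ≤ p Φ(v) = ξ v ≤ ‖u‖^(p-1) ‖v‖`, i.e. `μ_p ‖v‖ ≤ ‖u‖`,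
and then `μ_p^p p Φ(v) ≤ μ_p^(p-1) ‖u‖^p ≤ p Φ(u)`.
-/

theorem HasDerivAt.eq_of_eventually_add_mul_le {f : ℝ → ℝ} {f' s x : ℝ} (hf : HasDerivAt f f' x)
    (h : ∀ᶠ t in 𝓝 x, f x + (t - x) * s ≤ f t) : s = f' := by
  have hmin : IsLocalMin (fun t => f t - (t - x) * s) x := by
    filter_upwards [h] with t ht
    simp only [sub_self, zero_mul, sub_zero]
    linarith
  have h0 := hmin.hasDerivAt_eq_zero (hf.sub (((hasDerivAt_id x).sub_const x).mul_const s))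
  simp only [one_mul] at h0
  linarith

theorem eq_mul_of_forall_add_sub_one_mul_le_rpow_mul {p c s : ℝ}
    (h : ∀ t : ℝ, 0 < t → c + (t - 1) * s ≤ t ^ p * c) : s = p * c := by
  have hf : HasDerivAt (fun t : ℝ => t ^ p * c) (p * 1 ^ (p - 1) * c) 1 :=
    (Real.hasDerivAt_rpow_const (Or.inl one_ne_zero)).mul_const c
  rw [Real.one_rpow, mul_one] at hf
  refine hf.eq_of_eventually_add_mul_le ?_
  filter_upwards [eventually_gt_nhds zero_lt_one] with t ht
  simpa only [Real.one_rpow, one_mul] using h t ht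

theorem Real.rpow_sub_one_mul_self {x p : ℝ} (hx : 0 ≤ x) (hp : p ≠ 0) :
    x ^ (p - 1) * x = x ^ p := by
  rw [← Real.rpow_add_one' hx (by simpa using hp), sub_add_cancel]

theorem nonpos_of_forall_mul_le_rpow_mul {p a b : ℝ} (hp : 1 < p)
    (h : ∀ s : ℝ, 0 < s → s * a ≤ s ^ p * b) : a ≤ 0 := by
  have hlim : Tendsto (fun s : ℝ => s ^ (p - 1) * b) (𝓝[>] 0) (𝓝 0) := by
    have hc := (Real.continuousAt_rpow_const 0 (p - 1) (Or.inr (by linarith))).tendsto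
    rw [Real.zero_rpow (by linarith)] at hc
    simpa using (hc.mono_left nhdsWithin_le_nhds).mul_const b
  refine ge_of_tendsto hlim (eventually_mem_nhdsWithin.mono fun s hs => ?_)
  have hs : (0 : ℝ) < s := hs
  rw [← mul_le_mul_iff_right₀ hs]
  calc s * a ≤ s ^ p * b := h s hs
    _ = s * (s ^ (p - 1) * b) := by
      rw [← Real.rpow_sub_one_mul_self hs.le (by linarith : p ≠ 0)]; ring

theorem mul_le_of_rpow_mul_le {μ a b p : ℝ} (hμ : 0 ≤ μ) (ha : 0 ≤ a) (hb : 0 ≤ b) (hp : 1 < p)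
    (h : μ ^ (p - 1) * a ^ p ≤ b ^ (p - 1) * a) : μ * a ≤ b := by
  rcases ha.eq_or_lt with rfl | ha
  · simpa using hb
  have hpow : (μ * a) ^ (p - 1) ≤ b ^ (p - 1) := by
    rw [Real.mul_rpow hμ ha.le, ← mul_le_mul_iff_left₀ ha, mul_assoc,
      Real.rpow_sub_one_mul_self ha.le (by linarith)]
    exact h
  exact (Real.rpow_le_rpow_iff (by positivity) hb (by linarith)).mp hpow

theorem sInf_RayleighSet_mul_rpow_le {E : Type*} [NormedAddCommGroup E] {Φ : E → EReal}
    {p : ℝ} (hp : 0 < p) (hnn : ∀ x, 0 ≤ Φ x) {x : E} (hx : Φ x ≠ ⊤) :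
    sInf (RayleighSet Φ p) * ‖x‖ ^ p ≤ p * (Φ x).toReal := by
  rcases eq_or_ne x 0 with rfl | hx0
  · simpa [Real.zero_rpow hp.ne'] using mul_nonneg hp.le (EReal.toReal_nonneg (hnn 0))
  have hbdd : BddBelow (RayleighSet Φ p) := by
    refine ⟨0, ?_⟩
    rintro _ ⟨y, -, -, rfl⟩
    have := EReal.toReal_nonneg (hnn y)
    positivity
  rw [← le_div_iff₀ (by positivity)]
  exact csInf_le hbdd ⟨x, hx0, hx, rfl⟩

section

variable {E : Type*} [NormedAddCommGroup E] [NormedSpace ℝ E]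

theorem ne_top_of_mem_ERealSubdiff {Φ : E → EReal} {v w : E} {ξ : E →L[ℝ] ℝ}
    (hξ : ξ ∈ ERealSubdiff Φ v) (hw : Φ w ≠ ⊤) : Φ v ≠ ⊤ := by
  intro hv
  have h := hξ w
  rw [hv, EReal.top_add_coe, top_le_iff] at h
  exact hw h

theorem IsHomog.apply_zero {Φ : E → EReal} {p : ℝ} (hhom : IsHomog Φ p) (hp : p ≠ 0) :
    Φ 0 = 0 := by
  simpa [Real.zero_rpow hp] using hhom 0 le_rfl 0

theorem IsHomog.apply_eq_of_mem_ERealSubdiff {Φ : E → EReal} {p : ℝ} (hhom : IsHomog Φ p)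
    {v : E} {ξ : E →L[ℝ] ℝ} (hξ : ξ ∈ ERealSubdiff Φ v) (htop : Φ v ≠ ⊤) (hbot : Φ v ≠ ⊥) :
    ξ v = p * (Φ v).toReal := by
  refine eq_mul_of_forall_add_sub_one_mul_le_rpow_mul fun t ht => ?_
  have h := hξ (t • v)
  rw [hhom t ht.le, ← EReal.coe_toReal htop hbot, map_sub, map_smul, smul_eq_mul] at h
  exact_mod_cast (show (t - 1) * ξ v = t * ξ v - ξ v by ring) ▸ h

theorem Jdual_apply_self {p : ℝ} (hp : p ≠ 0) {u : E} {ξ : E →L[ℝ] ℝ} (hξ : ξ ∈ Jdual p u) :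
    ξ u = ‖u‖ ^ p := by
  have h := eq_mul_of_forall_add_sub_one_mul_le_rpow_mul (p := p) (c := ‖u‖ ^ p / p) (s := ξ u)
    fun t ht => by
      have h := hξ (t • u)
      rwa [norm_smul, Real.norm_of_nonneg ht.le, Real.mul_rpow ht.le (norm_nonneg u), map_sub,
        map_smul, smul_eq_mul, ← sub_one_mul, mul_div_assoc] at h
  rw [h, mul_div_cancel₀ _ hp]

theorem Jdual_apply_le_add {p : ℝ} (hp : p ≠ 0) {u : E} {ξ : E →L[ℝ] ℝ} (hξ : ξ ∈ Jdual p u)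
    (w : E) : ξ w ≤ ‖w‖ ^ p / p + (1 - 1 / p) * ‖u‖ ^ p := by
  have h := hξ w
  rw [map_sub, Jdual_apply_self hp hξ] at h
  linarith [show (1 - 1 / p) * ‖u‖ ^ p = ‖u‖ ^ p - ‖u‖ ^ p / p by ring]

theorem Jdual_apply_le {p : ℝ} (hp : 1 < p) {u : E} {ξ : E →L[ℝ] ℝ} (hξ : ξ ∈ Jdual p u)
    (z : E) : ξ z ≤ ‖u‖ ^ (p - 1) * ‖z‖ := by
  have hp0 : p ≠ 0 := by linarith
  have hscaled : ∀ s : ℝ, 0 < s → s * ξ z ≤ s ^ p * (‖z‖ ^ p / p) + (1 - 1 / p) * ‖u‖ ^ p :=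
    fun s hs => by
      have h := Jdual_apply_le_add hp0 hξ (s • z)
      rw [norm_smul, Real.norm_of_nonneg hs.le, Real.mul_rpow hs.le (norm_nonneg z), map_smul,
        smul_eq_mul] at h
      linarith [show s ^ p * (‖z‖ ^ p / p) = s ^ p * ‖z‖ ^ p / p by ring]
  rcases (norm_nonneg u).eq_or_lt with hu | hu
  · rw [← hu, Real.zero_rpow (by linarith), zero_mul]
    refine nonpos_of_forall_mul_le_rpow_mul (b := ‖z‖ ^ p / p) hp fun s hs => ?_
    simpa [← hu, Real.zero_rpow hp0] using hscaled s hs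
  rcases (norm_nonneg z).eq_or_lt with hz | hz
  · simp [norm_eq_zero.mp hz.symm]
  -- `s = ‖u‖ / ‖z‖` is the equality case of Young's inequality.
  have h := hscaled (‖u‖ / ‖z‖) (by positivity)
  rw [← mul_div_assoc, ← Real.mul_rpow (by positivity) hz.le, div_mul_cancel₀ _ hz.ne'] at h
  refine le_of_mul_le_mul_right ?_ hu
  calc ξ z * ‖u‖ = (‖u‖ / ‖z‖ * ξ z) * ‖z‖ := by field_simp
    _ ≤ ‖u‖ ^ p * ‖z‖ := by
      gcongr
      linarith [show ‖u‖ ^ p / p + (1 - 1 / p) * ‖u‖ ^ p = ‖u‖ ^ p by field_simp; ring]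
    _ = ‖u‖ ^ (p - 1) * ‖z‖ * ‖u‖ := by
      rw [← Real.rpow_sub_one_mul_self hu.le hp0]; ring

theorem norm_le_and_le_of_mem_ERealSubdiff_of_mem_Jdual {Φ : E → EReal} {p μ : ℝ} (hp : 1 < p)
    (hμ : 0 < μ) (hnn : ∀ x, 0 ≤ Φ x) (hhom : IsHomog Φ p)
    (hray : ∀ x, Φ x ≠ ⊤ → μ ^ (p - 1) * ‖x‖ ^ p ≤ p * (Φ x).toReal)
    {u v : E} {ξ : E →L[ℝ] ℝ} (hξΦ : ξ ∈ ERealSubdiff Φ v) (hξJ : ξ ∈ Jdual p u) :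
    ‖v‖ ≤ μ⁻¹ * ‖u‖ ∧ Φ v ≤ (((μ ^ p)⁻¹ : ℝ) : EReal) * Φ u := by
  have hp0 : p ≠ 0 := by linarith
  have hbot : ∀ x, Φ x ≠ ⊥ := fun x => ((hnn x).trans_lt' EReal.bot_lt_zero).ne'
  have hv : Φ v ≠ ⊤ := ne_top_of_mem_ERealSubdiff hξΦ (w := 0) (by simp [hhom.apply_zero hp0])
  have hpair : p * (Φ v).toReal ≤ ‖u‖ ^ (p - 1) * ‖v‖ :=
    hhom.apply_eq_of_mem_ERealSubdiff hξΦ hv (hbot v) ▸ Jdual_apply_le hp hξJ v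
  have hnorm : μ * ‖v‖ ≤ ‖u‖ :=
    mul_le_of_rpow_mul_le hμ.le (norm_nonneg v) (norm_nonneg u) hp ((hray v hv).trans hpair)
  refine ⟨by rwa [inv_mul_eq_div, le_div_iff₀' hμ], ?_⟩
  rcases eq_or_ne (Φ u) ⊤ with hu | hu
  · rw [hu, EReal.coe_mul_top_of_pos (by positivity)]
    exact le_top
  rw [← EReal.coe_toReal hv (hbot v), ← EReal.coe_toReal hu (hbot u), ← EReal.coe_mul,
    EReal.coe_le_coe_iff, le_inv_mul_iff₀ (by positivity),
    ← mul_le_mul_iff_right₀ (by linarith : 0 < p)]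
  calc p * (μ ^ p * (Φ v).toReal) = μ ^ p * (p * (Φ v).toReal) := by ring
    _ ≤ μ ^ p * (‖u‖ ^ (p - 1) * ‖v‖) := by gcongr
    _ = μ ^ (p - 1) * ‖u‖ ^ (p - 1) * (μ * ‖v‖) := by
      rw [← Real.rpow_sub_one_mul_self hμ.le hp0]; ring
    _ ≤ μ ^ (p - 1) * ‖u‖ ^ (p - 1) * ‖u‖ := by gcongr
    _ = μ ^ (p - 1) * ‖u‖ ^ p := by
      rw [mul_assoc, Real.rpow_sub_one_mul_self (norm_nonneg u) hp0]
    _ ≤ p * (Φ u).toReal := hray u hu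

theorem antitone_norm_pow_smul {μ : ℝ} (hμ : 0 < μ) {u : ℕ → E}
    (h : ∀ k, ‖u (k + 1)‖ ≤ μ⁻¹ * ‖u k‖) : Antitone fun k : ℕ => ‖(μ ^ k : ℝ) • u k‖ := by
  refine antitone_nat_of_succ_le fun k => ?_
  simp only [norm_smul, Real.norm_of_nonneg (pow_nonneg hμ.le _)]
  calc μ ^ (k + 1) * ‖u (k + 1)‖ ≤ μ ^ (k + 1) * (μ⁻¹ * ‖u k‖) := by gcongr; exact h k
    _ = μ ^ k * ‖u k‖ := by field_simp; ring

theorem IsHomog.antitone_pow_smul {Φ : E → EReal} {p μ : ℝ} (hhom : IsHomog Φ p) (hμ : 0 < μ)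
    {u : ℕ → E} (h : ∀ k, Φ (u (k + 1)) ≤ (((μ ^ p)⁻¹ : ℝ) : EReal) * Φ (u k)) :
    Antitone fun k : ℕ => Φ ((μ ^ k : ℝ) • u k) := by
  refine antitone_nat_of_succ_le fun k => ?_
  rw [hhom _ (by positivity), hhom _ (by positivity)]
  have hscale : (μ ^ (k + 1)) ^ p * (μ ^ p)⁻¹ = (μ ^ k) ^ p := by
    rw [pow_succ, Real.mul_rpow (by positivity) hμ.le, mul_assoc,
      mul_inv_cancel₀ (by positivity), mul_one]
  calc (((μ ^ (k + 1)) ^ p : ℝ) : EReal) * Φ (u (k + 1))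
      ≤ (((μ ^ (k + 1)) ^ p : ℝ) : EReal) * ((((μ ^ p)⁻¹ : ℝ) : EReal) * Φ (u k)) :=
        mul_le_mul_of_nonneg_left (h k) (EReal.coe_nonneg.mpr (by positivity))
    _ = (((μ ^ k) ^ p : ℝ) : EReal) * Φ (u k) := by rw [← mul_assoc, ← EReal.coe_mul, hscale]

end

theorem inverse_iteration_monotonicity_general (Φ : X → EReal) (p lam μ : ℝ) (hp : 1 < p)
    (hnn : ∀ x : X, (0 : EReal) ≤ Φ x)
    (hhom : IsHomog Φ p)
    (hlam : lam = sInf (RayleighSet Φ p)) (hpos : 0 < lam)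
    (hμ : μ = lam ^ (1 / (p - 1)))
    (u : ℕ → X)
    (hit : ∀ k : ℕ, ∃ ξ : X →L[ℝ] ℝ, ξ ∈ ERealSubdiff Φ (u (k + 1)) ∧ ξ ∈ Jdual p (u k)) :
    (∀ k : ℕ, ‖u (k + 1)‖ ≤ μ⁻¹ * ‖u k‖) ∧
      (∀ k : ℕ, Φ (u (k + 1)) ≤ (((μ ^ p)⁻¹ : ℝ) : EReal) * Φ (u k)) ∧
      Antitone (fun k : ℕ => ‖(μ ^ k : ℝ) • u k‖) ∧
      Antitone (fun k : ℕ => Φ ((μ ^ k : ℝ) • u k)) := by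
  have hμpos : 0 < μ := hμ ▸ Real.rpow_pos_of_pos hpos _
  have hμlam : μ ^ (p - 1) = lam := by
    rw [hμ, ← Real.rpow_mul hpos.le, one_div_mul_cancel (by linarith), Real.rpow_one]
  have hray : ∀ x, Φ x ≠ ⊤ → μ ^ (p - 1) * ‖x‖ ^ p ≤ p * (Φ x).toReal := fun x hx =>
    hμlam ▸ hlam ▸ sInf_RayleighSet_mul_rpow_le (by linarith) hnn hx
  have hstep : ∀ k, ‖u (k + 1)‖ ≤ μ⁻¹ * ‖u k‖ ∧
      Φ (u (k + 1)) ≤ (((μ ^ p)⁻¹ : ℝ) : EReal) * Φ (u k) := fun k =>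
    let ⟨_, hξΦ, hξJ⟩ := hit k
    norm_le_and_le_of_mem_ERealSubdiff_of_mem_Jdual hp hμpos hnn hhom hray hξΦ hξJ
  exact ⟨fun k => (hstep k).1, fun k => (hstep k).2,
    antitone_norm_pow_smul hμpos fun k => (hstep k).1,
    hhom.antitone_pow_smul hμpos fun k => (hstep k).2⟩

theorem inverse_iteration_monotonicity (Φ : X → EReal) (p lam μ : ℝ) (hp : 1 < p)
    (hnn : ∀ x : X, (0 : EReal) ≤ Φ x)
    (hconv : IsConvexE Φ) (hhom : IsHomog Φ p)
    (hlam : lam = sInf (RayleighSet Φ p)) (hpos : 0 < lam)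
    (hμ : μ = lam ^ (1 / (p - 1)))
    (u : ℕ → X)
    (hit : ∀ k : ℕ, ∃ ξ : X →L[ℝ] ℝ, ξ ∈ ERealSubdiff Φ (u (k + 1)) ∧ ξ ∈ Jdual p (u k)) :
    (∀ k : ℕ, ‖u (k + 1)‖ ≤ μ⁻¹ * ‖u k‖) ∧
      (∀ k : ℕ, Φ (u (k + 1)) ≤ (((μ ^ p)⁻¹ : ℝ) : EReal) * Φ (u k)) ∧
      Antitone (fun k : ℕ => ‖(μ ^ k : ℝ) • u k‖) ∧
      Antitone (fun k : ℕ => Φ ((μ ^ k : ℝ) • u k)) :=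
  inverse_iteration_monotonicity_general Φ p lam μ hp hnn hhom hlam hpos hμ u hit
end
end

section
/- If u_0 ∈ closure(Dom(Φ)) \ {0} and (u_k) satisfies ∂Φ(u_k) ∩ J_p(u_{k−1}) ≠ ∅ for all k ∈ ℕ, then u_k ∈ Dom(Φ) \ {0} for all k ≥ 1, and the Rayleigh quotients are nonincreasing: Φ(u_k)/‖u_k‖^p ≤ Φ(u_{k−1})/‖u_{k−1}‖^p. -/
open Filter Set MeasureTheory Topology
open scoped ENNReal NNReal

noncomputable section

variable {X : Type*} [NormedAddCommGroup X] [NormedSpace ℝ X] [CompleteSpace X]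

/-! A subgradient `ξ` of `Φ` at `u (k+1)` forces `Φ (u (k+1)) < ∞`, since the domain of `Φ`
is nonempty. By `p`-homogeneity with `p > 1`, a subgradient at `0` is nonpositive on the
closure of the domain, whereas `ξ ∈ J_p(u k)` has `ξ (u k) = ‖u k‖ ^ p > 0`; inductively
`u (k+1) ≠ 0`. For the monotonicity, `ξ ∈ J_p(u k)` has dual norm `‖u k‖ ^ (p - 1)`, attained
at `u k`, so with `c = ‖u (k+1)‖ / ‖u k‖` we get `ξ (u (k+1)) ≤ ξ (c • u k)`; the subgradient
inequality tested at `c • u k` then gives `Φ (u (k+1)) ≤ c ^ p * Φ (u k)`. -/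

/-- A line through `(1, 0)` supporting `t ↦ C (t ^ p - 1)` from below on `(0, ∞)` is its
tangent at `t = 1`. -/
theorem eq_mul_of_forall_mul_sub_one_le_mul_rpow_sub_one {p C D : ℝ}
    (h : ∀ t : ℝ, 0 < t → D * (t - 1) ≤ C * (t ^ p - 1)) : D = p * C := by
  have hderiv : HasDerivAt (fun t : ℝ => C * (t ^ p - 1) - D * (t - 1)) (C * p - D * 1) 1 := by
    have hpow := Real.hasDerivAt_rpow_const (x := 1) (p := p) (Or.inl one_ne_zero)
    rw [Real.one_rpow, mul_one] at hpow
    exact ((hpow.sub_const 1).const_mul C).sub (((hasDerivAt_id 1).sub_const 1).const_mul D)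
  have hmin : IsLocalMin (fun t : ℝ => C * (t ^ p - 1) - D * (t - 1)) 1 := by
    filter_upwards [eventually_gt_nhds one_pos] with t ht
    simpa using h t ht
  linarith [hmin.hasDerivAt_eq_zero hderiv]

section

variable {E : Type*} [NormedAddCommGroup E] [NormedSpace ℝ E] {p : ℝ} {u : E} {ξ : E →L[ℝ] ℝ}

theorem Jdual.apply_self (hp : p ≠ 0) (hξ : ξ ∈ Jdual p u) : ξ u = ‖u‖ ^ p := by
  suffices ξ u = p * (‖u‖ ^ p / p) by rwa [mul_div_cancel₀ _ hp] at this
  refine eq_mul_of_forall_mul_sub_one_le_mul_rpow_sub_one fun t ht => ?_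
  have h := hξ (t • u)
  rw [show t • u - u = (t - 1) • u by rw [sub_smul, one_smul], map_smul, smul_eq_mul, norm_smul,
    Real.norm_of_nonneg ht.le, Real.mul_rpow ht.le (norm_nonneg u), mul_div_assoc] at h
  linarith

theorem Jdual.apply_le (hp : 0 < p) (hξ : ξ ∈ Jdual p u) (hu : u ≠ 0) (w : E) :
    ξ w ≤ ‖u‖ ^ (p - 1) * ‖w‖ := by
  rcases eq_or_ne w 0 with rfl | hw
  · simp
  have hu' : 0 < ‖u‖ := norm_pos_iff.mpr hu
  have hw' : 0 < ‖w‖ := norm_pos_iff.mpr hw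
  set c := ‖u‖ / ‖w‖ with hc
  have hnorm : ‖c • w‖ = ‖u‖ := by
    rw [norm_smul, Real.norm_of_nonneg (by positivity), div_mul_cancel₀ _ hw'.ne']
  have h := hξ (c • w)
  rw [map_sub, map_smul, smul_eq_mul, hnorm, Jdual.apply_self hp.ne' hξ] at h
  have hcξ : c * ξ w ≤ ‖u‖ ^ p := by linarith
  rw [hc, div_mul_eq_mul_div, div_le_iff₀ hw'] at hcξ
  rw [Real.rpow_sub_one hu'.ne', div_mul_eq_mul_div, le_div_iff₀ hu']
  linarith

variable {Φ : E → EReal}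

theorem IsHomog.map_zero (hhom : IsHomog Φ p) (hp : p ≠ 0) : Φ 0 = 0 := by
  simpa [Real.zero_rpow hp] using hhom 0 le_rfl 0

theorem ERealSubdiff.ne_top {v w : E} (hξ : ξ ∈ ERealSubdiff Φ v) (hw : Φ w ≠ ⊤) : Φ v ≠ ⊤ := by
  intro hv
  have h := hξ w
  rw [hv, EReal.top_add_coe, top_le_iff] at h
  exact hw h

theorem ERealSubdiff.apply_nonpos_of_mem_closure (hp : 1 < p) (hhom : IsHomog Φ p)
    (hξ : ξ ∈ ERealSubdiff Φ 0) {w : E} (hw : w ∈ closure {x | Φ x ≠ ⊤}) : ξ w ≤ 0 := by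
  refine closure_minimal (fun w hw => ?_) (isClosed_le ξ.continuous continuous_const) hw
  have hbound : ∀ t : ℝ, 0 < t → ξ w ≤ t ^ (p - 1) * (Φ w).toReal := by
    intro t ht
    have h : ((ξ (t • w) : ℝ) : EReal) ≤ ((t ^ p * (Φ w).toReal : ℝ) : EReal) := by
      have := hξ (t • w)
      rw [hhom.map_zero (by linarith), zero_add, sub_zero, hhom t ht.le w] at this
      rw [EReal.coe_mul]
      exact this.trans (mul_le_mul_of_nonneg_left (EReal.le_coe_toReal hw) (by positivity))
    rw [EReal.coe_le_coe_iff, map_smul, smul_eq_mul] at h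
    rw [Real.rpow_sub_one ht.ne', div_mul_eq_mul_div, le_div_iff₀ ht]
    linarith
  have hlim : Tendsto (fun t : ℝ => t ^ (p - 1) * (Φ w).toReal) (𝓝[>] 0) (𝓝 0) := by
    have := (Real.continuousAt_rpow_const 0 (p - 1) (Or.inr (by linarith))).tendsto
    rw [Real.zero_rpow (by linarith)] at this
    simpa using (this.mono_left nhdsWithin_le_nhds).mul_const (Φ w).toReal
  exact ge_of_tendsto hlim (eventually_nhdsWithin_of_forall hbound)

theorem ERealSubdiff.ne_zero_of_mem_Jdual (hp : 1 < p) (hhom : IsHomog Φ p) {v : E}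
    (hξ : ξ ∈ ERealSubdiff Φ v) (hJ : ξ ∈ Jdual p u) (hu : u ≠ 0)
    (hucl : u ∈ closure {x | Φ x ≠ ⊤}) : v ≠ 0 := by
  rintro rfl
  have h := ERealSubdiff.apply_nonpos_of_mem_closure hp hhom hξ hucl
  rw [Jdual.apply_self (by linarith) hJ] at h
  exact (Real.rpow_pos_of_pos (norm_pos_iff.mpr hu) p).not_ge h

theorem ERealSubdiff.mul_norm_rpow_le_of_mem_Jdual (hp : 0 < p) (hhom : IsHomog Φ p) {v : E}
    (hξ : ξ ∈ ERealSubdiff Φ v) (hJ : ξ ∈ Jdual p u) (hu : u ≠ 0) :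
    Φ v * ((‖u‖ ^ p : ℝ) : EReal) ≤ Φ u * ((‖v‖ ^ p : ℝ) : EReal) := by
  have hu' : 0 < ‖u‖ := norm_pos_iff.mpr hu
  set c := ‖v‖ / ‖u‖ with hc
  -- `c • u` has the norm of `v`, and on that sphere `ξ` is maximal at `c • u`.
  have hmax : ξ v ≤ ξ (c • u) := by
    rw [map_smul, smul_eq_mul, Jdual.apply_self hp.ne' hJ]
    calc ξ v ≤ ‖u‖ ^ (p - 1) * ‖v‖ := Jdual.apply_le hp hJ hu v
      _ = c * ‖u‖ ^ p := by rw [Real.rpow_sub_one hu'.ne', hc]; ring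
  have hstep : Φ v ≤ ((c ^ p : ℝ) : EReal) * Φ u := by
    rw [← hhom c (by positivity) u]
    calc Φ v ≤ Φ v + ((ξ (c • u - v) : ℝ) : EReal) :=
          le_add_of_nonneg_right (EReal.coe_nonneg.mpr (by rw [map_sub]; linarith))
      _ ≤ Φ (c • u) := hξ _
  calc Φ v * ((‖u‖ ^ p : ℝ) : EReal)
      ≤ ((c ^ p : ℝ) : EReal) * Φ u * ((‖u‖ ^ p : ℝ) : EReal) :=
        mul_le_mul_of_nonneg_right hstep (EReal.coe_nonneg.mpr (by positivity))
    _ = Φ u * ((‖v‖ ^ p : ℝ) : EReal) := by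
      rw [mul_comm _ (Φ u), mul_assoc, ← EReal.coe_mul, ← Real.mul_rpow (by positivity)
        hu'.le, div_mul_cancel₀ _ hu'.ne']

end

theorem inverse_iteration_rayleigh_monotone_general (Φ : X → EReal) (p : ℝ) (hp : 1 < p)
    (hhom : IsHomog Φ p)
    (u : ℕ → X) (hu0 : u 0 ∈ closure {x : X | Φ x ≠ ⊤}) (hu0' : u 0 ≠ 0)
    (hit : ∀ k : ℕ, ∃ ξ : X →L[ℝ] ℝ, ξ ∈ ERealSubdiff Φ (u (k + 1)) ∧ ξ ∈ Jdual p (u k)) :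
    (∀ k : ℕ, 1 ≤ k → Φ (u k) ≠ ⊤ ∧ u k ≠ 0) ∧
      ∀ k : ℕ, Φ (u (k + 1)) * ((‖u k‖ ^ p : ℝ) : EReal) ≤
        Φ (u k) * ((‖u (k + 1)‖ ^ p : ℝ) : EReal) := by
  choose ξ hsub hJ using hit
  obtain ⟨w, hw⟩ := closure_nonempty_iff.mp ⟨u 0, hu0⟩
  have hdom (k : ℕ) : Φ (u (k + 1)) ≠ ⊤ := ERealSubdiff.ne_top (hsub k) hw
  have hne (k : ℕ) : u k ≠ 0 ∧ u k ∈ closure {x | Φ x ≠ ⊤} := by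
    induction k with
    | zero => exact ⟨hu0', hu0⟩
    | succ k ih =>
      exact ⟨ERealSubdiff.ne_zero_of_mem_Jdual hp hhom (hsub k) (hJ k) ih.1 ih.2,
        subset_closure (hdom k)⟩
  refine ⟨fun k hk => ?_, fun k =>
    ERealSubdiff.mul_norm_rpow_le_of_mem_Jdual (by linarith) hhom (hsub k) (hJ k) (hne k).1⟩
  obtain ⟨k, rfl⟩ := Nat.exists_eq_add_of_le' hk
  exact ⟨hdom k, (hne (k + 1)).1⟩

theorem inverse_iteration_rayleigh_monotone (Φ : X → EReal) (p : ℝ) (hp : 1 < p)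
    (hnn : ∀ x : X, (0 : EReal) ≤ Φ x)
    (hconv : IsConvexE Φ) (hsc : IsStrictConvexOnDom Φ)
    (hlsc : LowerSemicontinuous Φ) (hhom : IsHomog Φ p)
    (hcs : ∀ c : ℝ, IsCompact {x : X | Φ x ≤ (c : EReal)})
    (u : ℕ → X) (hu0 : u 0 ∈ closure {x : X | Φ x ≠ ⊤}) (hu0' : u 0 ≠ 0)
    (hit : ∀ k : ℕ, ∃ ξ : X →L[ℝ] ℝ, ξ ∈ ERealSubdiff Φ (u (k + 1)) ∧ ξ ∈ Jdual p (u k)) :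
    (∀ k : ℕ, 1 ≤ k → Φ (u k) ≠ ⊤ ∧ u k ≠ 0) ∧
      ∀ k : ℕ, Φ (u (k + 1)) * ((‖u k‖ ^ p : ℝ) : EReal) ≤
        Φ (u k) * ((‖u (k + 1)‖ ^ p : ℝ) : EReal) :=
  inverse_iteration_rayleigh_monotone_general Φ p hp hhom u hu0 hu0' hit
end
end
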